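/- If X is an indecomposable non-free totally reflexive module over a local ring (S, 𝔫, ℓ), then the evaluation map θ: X ⊗_S ℓ → Hom_S(X*, ℓ) is the zero map. -/

import Mathlib

/-!
A functional `ζ : X → S` taking a unit value splits off a free summand `S` of `X`: the map
`y ↦ ζ y • x`, with `ζ x = 1`, is an idempotent endomorphism with nonzero range. Since `X` is
indecomposable, its kernel vanishes, so `ζ : X ≃ S` and `X` would be free. Hence every
functional takes values in `𝔫`, and `θ (x ⊗ n) = (ζ ↦ ζ x • n)` vanishes over `ℓ = S/𝔫`.
-/

open CategoryTheory Opposite TensorProduct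

universe u

noncomputable section

/-- `Ext^i_R(M, N) = 0`. -/
def ExtVanishes (R : Type u) [CommRing R] (M N : ModuleCat.{u} R) (i : ℕ) : Prop :=
  Subsingleton (((Ext R (ModuleCat.{u} R) i).obj (op M)).obj N)

/-- `Tor_i^R(M, N) = 0`. -/
def TorVanishes (R : Type u) [CommRing R] (M N : ModuleCat.{u} R) (i : ℕ) : Prop :=
  Subsingleton (((Tor (ModuleCat.{u} R) i).obj M).obj N)

/-- `G` is totally reflexive: it is the cokernel of a differential in an exact complex `F`
of finitely generated free modules such that `Hom_R(F, R)` is also exact. -/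
def IsTotallyReflexive (R : Type u) [CommRing R] (G : ModuleCat.{u} R) : Prop :=
  ∃ (F : ℤ → ModuleCat.{u} R) (d : ∀ i : ℤ, F (i + 1) ⟶ F i),
    (∀ i, Module.Free R (F i)) ∧ (∀ i, Module.Finite R (F i)) ∧
    (∀ i, LinearMap.range (d (i + 1)).hom = LinearMap.ker (d i).hom) ∧
    (∀ i, LinearMap.range (LinearMap.dualMap (d i).hom) =
      LinearMap.ker (LinearMap.dualMap (d (i + 1)).hom)) ∧
    Nonempty (G ≃ₗ[R] (↥(F 0) ⧸ LinearMap.range (d 0).hom))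

/-- `M` is an indecomposable module. -/
def IsIndecomposable (R : Type u) [CommRing R] (M : ModuleCat.{u} R) : Prop :=
  Nontrivial M ∧ ∀ Z W : Submodule R M, IsCompl Z W → Z = ⊥ ∨ W = ⊥

/-- The natural evaluation map `θ : X ⊗ N → Hom(X*, N)`, `x ⊗ n ↦ (ζ ↦ ζ x • n)`. -/
def theta (S : Type u) [CommRing S] (X N : Type u) [AddCommGroup X] [Module S X]
    [AddCommGroup N] [Module S N] :
    (X ⊗[S] N) →ₗ[S] (Module.Dual S X →ₗ[S] N) :=
  (dualTensorHom S (Module.Dual S X) N).comp ((Module.Dual.eval S X).rTensor N)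

namespace IsIndecomposable

variable {R : Type u} [CommRing R] {M : ModuleCat.{u} R}

theorem free_of_dual_apply_eq_one (hM : IsIndecomposable R M) {ζ : Module.Dual R M} {x : M}
    (hx : ζ x = 1) : Module.Free R M := by
  let p : M →ₗ[R] M := LinearMap.toSpanSingleton R M x ∘ₗ ζ
  have hp : ∀ y, p y = ζ y • x := fun _ => rfl
  have hidem : IsIdempotentElem p := LinearMap.ext fun y => by
    simp only [Module.End.mul_apply, hp, map_smul, hx, smul_eq_mul, mul_one]
  rcases hM.2 _ _ (LinearMap.IsIdempotentElem.isCompl hidem) with hrange | hker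
  · have hx0 : x = 0 := by
      simpa [hp, hx] using LinearMap.congr_fun (LinearMap.range_eq_bot.1 hrange) x
    have : Subsingleton R := subsingleton_of_zero_eq_one (by rw [← hx, hx0, map_zero])
    exact absurd (Module.subsingleton R M) (not_subsingleton_iff_nontrivial.2 hM.1)
  · have hinj : Function.Injective ζ := fun a b hab =>
      LinearMap.ker_eq_bot.1 hker (by simp only [hp, hab])
    have hsurj : Function.Surjective ζ := fun r => ⟨r • x, by simp [hx]⟩
    exact Module.Free.of_equiv (LinearEquiv.ofBijective ζ ⟨hinj, hsurj⟩).symm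

theorem dual_apply_mem_maximalIdeal [IsLocalRing R] (hM : IsIndecomposable R M)
    (hnf : ¬ Module.Free R M) (ζ : Module.Dual R M) (x : M) :
    ζ x ∈ IsLocalRing.maximalIdeal R := by
  by_contra h
  obtain ⟨u, hu⟩ := IsLocalRing.notMem_maximalIdeal.1 h
  exact hnf <| hM.free_of_dual_apply_eq_one (ζ := ζ) (x := (u⁻¹ : Rˣ) • x)
    (by simp [← hu, Units.smul_def])

end IsIndecomposable

theorem theta_tmul_apply (S : Type u) [CommRing S] {X N : Type u} [AddCommGroup X] [Module S X]
    [AddCommGroup N] [Module S N] (x : X) (n : N) (ζ : Module.Dual S X) :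
    theta S X N (x ⊗ₜ n) ζ = ζ x • n := by
  simp [theta, dualTensorHom_apply]

theorem theta_eq_zero_of_indecomposable_nonfree_general
    (S : Type u) [CommRing S] [IsLocalRing S]
    (X : ModuleCat.{u} S)
    (hind : IsIndecomposable S X) (hnf : ¬ Module.Free S X) :
    theta S ↥X (IsLocalRing.ResidueField S) = 0 := by
  refine TensorProduct.ext' fun x n => LinearMap.ext fun ζ => ?_
  have hres : IsLocalRing.residue S (ζ x) = 0 :=
    (IsLocalRing.residue_eq_zero_iff _).2 (hind.dual_apply_mem_maximalIdeal hnf ζ x)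
  rw [theta_tmul_apply, Algebra.smul_def, IsLocalRing.ResidueField.algebraMap_eq, hres, zero_mul]
  rfl

/-- If `X` is an indecomposable non-free totally reflexive module over a local ring
`(S, 𝔫, ℓ)`, then the evaluation map `θ : X ⊗ ℓ → Hom(X*, ℓ)` is zero. -/
theorem theta_eq_zero_of_indecomposable_nonfree
    (S : Type u) [CommRing S] [IsLocalRing S] [IsNoetherianRing S]
    (X : ModuleCat.{u} S) (hX : IsTotallyReflexive S X)
    (hind : IsIndecomposable S X) (hnf : ¬ Module.Free S X) :
    theta S ↥X (IsLocalRing.ResidueField S) = 0 :=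
  theta_eq_zero_of_indecomposable_nonfree_general S X hind hnf
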